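/- Let Q_N(λ) = λ^N + Σ_{k=0}^{N-1} q_k λ^k be a monic complex polynomial and let λ_0 be a zero of Q_N of multiplicity m. Then there exist ε > 0 and C > 0 such that for every monic polynomial Q̃_N(λ) = λ^N + Σ_{k=0}^{N-1} q̃_k λ^k with δ := max_k |q_k - q̃_k| ≤ ε, the polynomial Q̃_N has exactly m zeros λ̃_1, ..., λ̃_m (counted with multiplicity) satisfying |λ̃_j - λ_0| ≤ C δ^{1/m} for all j = 1, ..., m. -/

import Mathlib

/-!
Write `Q = (X - λ₀)^m R` with `R(λ₀) ≠ 0` and choose `r > 0` with `|R| ≥ |R(λ₀)|/2` on the disc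
`|z - λ₀| ≤ r`, so that `λ₀` is the only root of `Q` there. At a root `z` of `Q̃` in this disc,
`|z - λ₀|^m |R(z)| = |Q(z) - Q̃(z)| = O(δ)`, hence `|z - λ₀| ≤ C δ^{1/m}`; once `C δ^{1/m} ≤ r`,
the roots of `Q̃` within `C δ^{1/m}` of `λ₀` are exactly those within `r`.

That there are exactly `m` of the latter is the continuity of the roots: for a sequence of
counterexamples, Cauchy's bound confines the root vectors to a compact set, and a convergent
subsequence tends to a root vector of `Q`; its entries equal to `λ₀` (there are `m` of them) and
those outside the disc then eventually produce exactly `m` roots in the disc.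
-/

open Polynomial Finset Filter Topology

theorem Multiset.exists_eq_map_univ_fin {α : Type*} (s : Multiset α) {n : ℕ}
    (h : Multiset.card s = n) : ∃ v : Fin n → α, s = univ.val.map v := by
  obtain ⟨l, rfl⟩ : ∃ l : List α, (l : Multiset α) = s := Quot.exists_rep s
  subst h
  refine ⟨l.get, ?_⟩
  change (l : Multiset α) = univ.val.map (l.get : Fin l.length → α)
  rw [Fin.univ_val_map, List.ofFn_get]

theorem eventually_card_filter_norm_sub_le_eq_count {E ι β : Type*} [SeminormedAddCommGroup E]
    [DecidableEq E] [Fintype ι] {l : Filter β} {v : β → ι → E} {a : ι → E}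
    (hv : Tendsto v l (𝓝 a)) (x : E) {r : ℝ} (hr : 0 < r)
    (hsep : ∀ i, a i ≠ x → r < ‖a i - x‖) :
    ∀ᶠ n in l, Multiset.card ((univ.val.map (v n)).filter (fun z => ‖z - x‖ ≤ r))
      = (univ.val.map a).count x := by
  have hi : ∀ i, ∀ᶠ n in l, (‖v n i - x‖ ≤ r ↔ a i = x) := by
    intro i
    have hlim : Tendsto (fun n => ‖v n i - x‖) l (𝓝 ‖a i - x‖) :=
      ((tendsto_pi_nhds.1 hv i).sub_const x).norm
    by_cases hax : a i = x
    · filter_upwards [hlim.eventually_lt_const (by simpa [hax] using hr)] with n hn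
      exact iff_of_true hn.le hax
    · filter_upwards [hlim.eventually_const_lt (hsep i hax)] with n hn
      exact iff_of_false (not_le.2 hn) hax
  filter_upwards [eventually_all.2 hi] with n hn
  rw [Multiset.filter_map, Multiset.card_map, Multiset.count_map]
  exact congrArg _ (Multiset.filter_congr fun i _ => (hn i).trans eq_comm)

theorem Polynomial.roots_prod_univ_X_sub_C {R ι : Type*} [CommRing R] [IsDomain R] [Fintype ι]
    (v : ι → R) : (∏ i, (X - C (v i))).roots = univ.val.map v := by
  rw [Finset.prod_eq_multiset_prod, ← roots_multiset_prod_X_sub_C (univ.val.map v),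
    Multiset.map_map]
  rfl

theorem Polynomial.Monic.exists_eq_prod_X_sub_C {k : Type*} [Field k] [IsAlgClosed k]
    {p : k[X]} (hp : p.Monic) {N : ℕ} (hN : p.natDegree = N) :
    ∃ v : Fin N → k, p = ∏ i, (X - C (v i)) := by
  obtain ⟨v, hv⟩ :=
    p.roots.exists_eq_map_univ_fin (IsAlgClosed.card_roots_eq_natDegree.trans hN)
  refine ⟨v, ?_⟩
  conv_lhs => rw [(IsAlgClosed.splits p).eq_prod_roots_of_monic hp, hv]
  rw [Multiset.map_map, Finset.prod_eq_multiset_prod]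
  rfl

theorem Polynomial.rootMultiplicity_le_natDegree {R : Type*} [CommRing R] [IsDomain R]
    (p : R[X]) (a : R) : p.rootMultiplicity a ≤ p.natDegree := by
  classical
  rw [← count_roots]
  exact (Multiset.count_le_card a p.roots).trans (card_roots' p)

section NormedField

variable {𝕜 : Type*} [NormedField 𝕜]

theorem Polynomial.norm_eval_sub_eval_le {N : ℕ} {P Q : 𝕜[X]} (hP : P.Monic) (hQ : Q.Monic)
    (hdP : P.natDegree = N) (hdQ : Q.natDegree = N) {δ : ℝ} (hδ : 0 ≤ δ)
    (h : ∀ k < N, ‖P.coeff k - Q.coeff k‖ ≤ δ) (z : 𝕜) :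
    ‖P.eval z - Q.eval z‖ ≤ N * δ * (max 1 ‖z‖) ^ N := by
  have hsum : P.eval z - Q.eval z = ∑ i ∈ range N, (P.coeff i - Q.coeff i) * z ^ i := by
    have hPN : P.coeff N = 1 := hdP ▸ hP.coeff_natDegree
    have hQN : Q.coeff N = 1 := hdQ ▸ hQ.coeff_natDegree
    rw [eval_eq_sum_range, eval_eq_sum_range, hdP, hdQ, ← sum_sub_distrib, sum_range_succ,
      hPN, hQN, sub_self, add_zero]
    simp only [sub_mul]
  rw [hsum]
  calc ‖∑ i ∈ range N, (P.coeff i - Q.coeff i) * z ^ i‖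
      ≤ ∑ i ∈ range N, ‖(P.coeff i - Q.coeff i) * z ^ i‖ := norm_sum_le _ _
    _ ≤ ∑ _i ∈ range N, δ * (max 1 ‖z‖) ^ N := by
        refine sum_le_sum fun i hi => ?_
        rw [norm_mul, norm_pow]
        gcongr
        · exact h i (mem_range.1 hi)
        · calc ‖z‖ ^ i ≤ (max 1 ‖z‖) ^ i := by gcongr; exact le_max_right _ _
            _ ≤ (max 1 ‖z‖) ^ N := pow_le_pow_right₀ (le_max_left _ _) (mem_range.1 hi).le
    _ = N * δ * (max 1 ‖z‖) ^ N := by rw [sum_const, card_range, nsmul_eq_mul, mul_assoc]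

theorem Polynomial.norm_le_cauchyBound_add_one_of_isRoot {P Q : 𝕜[X]} (hP : P.Monic)
    (hQ : Q.Monic) (hd : P.natDegree = Q.natDegree)
    (h : ∀ k < Q.natDegree, ‖Q.coeff k - P.coeff k‖ ≤ 1) {z : 𝕜} (hz : P.IsRoot z) : ‖z‖ ≤ Q.cauchyBound + 1 := by
  have hsup : (range P.natDegree).sup (‖P.coeff ·‖₊)
      ≤ (range Q.natDegree).sup (‖Q.coeff ·‖₊) + 1 := by
    rw [hd]
    refine Finset.sup_le fun k hk => ?_
    have hk' : ‖P.coeff k‖ ≤ ‖Q.coeff k‖ + 1 :=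
      (norm_le_norm_add_norm_sub _ _).trans (by gcongr; exact h k (mem_range.1 hk))
    exact (show ‖P.coeff k‖₊ ≤ ‖Q.coeff k‖₊ + 1 from hk').trans
      (by gcongr; exact le_sup (f := (‖Q.coeff ·‖₊)) hk)
  have hbound : P.cauchyBound ≤ Q.cauchyBound + 1 := by
    simp only [cauchyBound, hP.leadingCoeff, hQ.leadingCoeff, nnnorm_one, div_one]
    exact add_le_add_left hsup 1
  exact_mod_cast (hz.norm_lt_cauchyBound hP.ne_zero).le.trans hbound

theorem Polynomial.eq_prod_X_sub_C_of_tendsto_eval {ι β : Type*} [Infinite 𝕜] [Fintype ι]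
    {l : Filter β} [l.NeBot] {v : β → ι → 𝕜} {a : ι → 𝕜} (hv : Tendsto v l (𝓝 a)) {Q : 𝕜[X]}
    (hQ : ∀ z, Tendsto (fun n => (∏ i, (X - C (v n i))).eval z) l (𝓝 (Q.eval z))) :
    Q = ∏ i, (X - C (a i)) := by
  refine Polynomial.funext fun z => tendsto_nhds_unique (hQ z) ?_
  simp only [eval_prod, eval_sub, eval_X, eval_C]
  exact tendsto_finsetProd _ fun i _ => tendsto_const_nhds.sub (tendsto_pi_nhds.1 hv i)

theorem Polynomial.exists_pos_forall_half_norm_eval_lt (R : 𝕜[X]) {x : 𝕜}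
    (hx : R.eval x ≠ 0) : ∃ r > 0, ∀ z, ‖z - x‖ ≤ r → ‖R.eval x‖ / 2 < ‖R.eval z‖ := by
  obtain ⟨r, hr, hball⟩ := Metric.nhds_basis_closedBall.eventually_iff.1 <|
    R.continuous.norm.continuousAt.eventually (lt_mem_nhds (half_lt_self (norm_pos_iff.2 hx)))
  exact ⟨r, hr, fun z hz => hball (mem_closedBall_iff_norm.2 hz)⟩

theorem Polynomial.lt_norm_sub_of_mem_roots {Q R : 𝕜[X]} {x : 𝕜} {m : ℕ}
    (hQR : Q = (X - C x) ^ m * R) {r : ℝ} (hR : ∀ z, ‖z - x‖ ≤ r → R.eval z ≠ 0) {z : 𝕜}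
    (hz : z ∈ Q.roots) (hzx : z ≠ x) : r < ‖z - x‖ := by
  by_contra! hzr
  have hQz := (isRoot_of_mem_roots hz).eq_zero
  rw [hQR, eval_mul, eval_pow, eval_sub, eval_X, eval_C] at hQz
  exact hR z hzr ((mul_eq_zero.1 hQz).resolve_left (pow_ne_zero m (sub_ne_zero.2 hzx)))

theorem Polynomial.norm_sub_le_rpow_of_isRoot {N m : ℕ} (hm : 1 ≤ m)
    {Q P R : 𝕜[X]} {x : 𝕜} (hQR : Q = (X - C x) ^ m * R) (hQ : Q.Monic) (hP : P.Monic)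
    (hdQ : Q.natDegree = N) (hdP : P.natDegree = N) {δ : ℝ} (hδ : 0 ≤ δ)
    (h : ∀ k < N, ‖Q.coeff k - P.coeff k‖ ≤ δ) {r c : ℝ} (hc : 0 < c)
    (hR : ∀ z, ‖z - x‖ ≤ r → c ≤ ‖R.eval z‖) {z : 𝕜} (hz : P.IsRoot z) (hzr : ‖z - x‖ ≤ r) :
    ‖z - x‖ ≤ (N * (max 1 (‖x‖ + r)) ^ N / c * δ) ^ ((1:ℝ) / m) := by
  have hzx : ‖z‖ ≤ ‖x‖ + r := (norm_le_norm_add_norm_sub' z x).trans (by gcongr)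
  have hpow : c * ‖z - x‖ ^ m ≤ N * δ * (max 1 (‖x‖ + r)) ^ N :=
    calc c * ‖z - x‖ ^ m ≤ ‖R.eval z‖ * ‖z - x‖ ^ m := by gcongr; exact hR z hzr
      _ = ‖Q.eval z - P.eval z‖ := by
          rw [hz.eq_zero, sub_zero, hQR, eval_mul, eval_pow, eval_sub, eval_X, eval_C, norm_mul,
            norm_pow, mul_comm]
      _ ≤ N * δ * (max 1 ‖z‖) ^ N := norm_eval_sub_eval_le hQ hP hdQ hdP hδ h z
      _ ≤ N * δ * (max 1 (‖x‖ + r)) ^ N := by gcongr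
  calc ‖z - x‖ = (‖z - x‖ ^ m) ^ ((1:ℝ) / m) := by
        rw [one_div, Real.pow_rpow_inv_natCast (norm_nonneg _) (by omega)]
    _ ≤ (N * (max 1 (‖x‖ + r)) ^ N / c * δ) ^ ((1:ℝ) / m) := by
        gcongr
        rw [div_mul_eq_mul_div, le_div_iff₀ hc]
        linarith

theorem Polynomial.filter_roots_norm_sub_le_rpow_eq {N m : ℕ} (hm : 1 ≤ m)
    {Q P R : 𝕜[X]} {x : 𝕜} (hQR : Q = (X - C x) ^ m * R) (hQ : Q.Monic) (hP : P.Monic)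
    (hdQ : Q.natDegree = N) (hdP : P.natDegree = N) {δ : ℝ} (hδ : 0 ≤ δ)
    (h : ∀ k < N, ‖Q.coeff k - P.coeff k‖ ≤ δ) {r c : ℝ} (hr : 0 ≤ r) (hc : 0 < c)
    (hR : ∀ z, ‖z - x‖ ≤ r → c ≤ ‖R.eval z‖)
    (hδr : N * (max 1 (‖x‖ + r)) ^ N / c * δ ≤ r ^ m) :
    P.roots.filter (fun z => ‖z - x‖ ≤ (N * (max 1 (‖x‖ + r)) ^ N / c * δ) ^ ((1:ℝ) / m))
      = P.roots.filter (fun z => ‖z - x‖ ≤ r) := by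
  have hsmall : (N * (max 1 (‖x‖ + r)) ^ N / c * δ) ^ ((1:ℝ) / m) ≤ r :=
    calc _ ≤ (r ^ m) ^ ((1:ℝ) / m) := by gcongr
      _ = r := by rw [one_div, Real.pow_rpow_inv_natCast hr (by omega)]
  exact Multiset.filter_congr fun z hz => ⟨fun hzr => hzr.trans hsmall,
    norm_sub_le_rpow_of_isRoot hm hQR hQ hP hdQ hdP hδ h hc hR (isRoot_of_mem_roots hz)⟩

end NormedField

theorem Polynomial.exists_card_filter_roots_eq_rootMultiplicity {N : ℕ} {Q : ℂ[X]}
    (hQ : Q.Monic) (hdQ : Q.natDegree = N) (x : ℂ) {r : ℝ} (hr : 0 < r)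
    (hsep : ∀ z ∈ Q.roots, z ≠ x → r < ‖z - x‖) :
    ∃ ε > (0:ℝ), ∀ P : ℂ[X], P.Monic → P.natDegree = N →
      (∀ k < N, ‖Q.coeff k - P.coeff k‖ ≤ ε) →
      Multiset.card (P.roots.filter (fun z => ‖z - x‖ ≤ r)) = Q.rootMultiplicity x := by
  classical
  by_contra! hcon
  choose P hPm hPd hPc hPcount using fun n : ℕ => hcon (1 / (n + 1)) (by positivity)
  choose v hv using fun n => (hPm n).exists_eq_prod_X_sub_C (hPd n)
  have hProots : ∀ n, (P n).roots = univ.val.map (v n) := fun n => by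
    rw [hv n, roots_prod_univ_X_sub_C]
  have hbdd : ∀ n, v n ∈ Metric.closedBall 0 (Q.cauchyBound + 1) := by
    refine fun n => mem_closedBall_zero_iff.2 <| (pi_norm_le_iff_of_nonneg (by positivity)).2 ?_
    intro i
    have hroot : (P n).IsRoot (v n i) :=
      isRoot_of_mem_roots (hProots n ▸ Multiset.mem_map_of_mem _ (mem_univ i))
    refine norm_le_cauchyBound_add_one_of_isRoot (hPm n) hQ ((hPd n).trans hdQ.symm)
      (fun k hk => (hPc n k (hdQ ▸ hk)).trans ?_) hroot
    exact div_le_one_of_le₀ (by simp) (by positivity)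
  obtain ⟨a, -, φ, hφ, hva⟩ := tendsto_subseq_of_bounded Metric.isBounded_closedBall hbdd
  have heval : ∀ z, Tendsto (fun n => (P n).eval z) atTop (𝓝 (Q.eval z)) := by
    intro z
    rw [tendsto_iff_norm_sub_tendsto_zero]
    refine squeeze_zero (g := fun n : ℕ => N * (1 / ((n : ℝ) + 1)) * (max 1 ‖z‖) ^ N)
      (fun n => norm_nonneg _) (fun n => ?_)
      (by simpa using ((tendsto_one_div_add_atTop_nhds_zero_nat.const_mul (N : ℝ)).mul_const
        ((max 1 ‖z‖) ^ N)))
    rw [norm_sub_rev]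
    exact norm_eval_sub_eval_le hQ (hPm n) hdQ (hPd n) (by positivity) (hPc n) z
  have hQa : Q = ∏ i, (X - C (a i)) :=
    eq_prod_X_sub_C_of_tendsto_eval hva fun z => by
      simpa only [Function.comp_def, hv] using (heval z).comp hφ.tendsto_atTop
  have hQroots : Q.roots = univ.val.map a := by rw [hQa, roots_prod_univ_X_sub_C]
  have hsep' : ∀ i, a i ≠ x → r < ‖a i - x‖ := fun i =>
    hsep _ (hQroots ▸ Multiset.mem_map_of_mem _ (mem_univ i))
  obtain ⟨n, hn⟩ := (eventually_card_filter_norm_sub_le_eq_count hva x hr hsep').exists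
  exact hPcount (φ n) (by rw [hProots, ← count_roots, hQroots]; exact hn)

/-- Stability of a zero of multiplicity `m` of a monic polynomial under small
perturbations of the coefficients: if the coefficients of a monic polynomial `Q̃` of the
same degree differ from those of `Q` by at most `δ ≤ ε`, then `Q̃` has exactly `m` zeros
(counted with multiplicity) in the disc `|z - λ₀| ≤ C δ^{1/m}`. -/
theorem stmt_2 (N m : ℕ) (Q : ℂ[X]) (hQ : Q.Monic) (hQdeg : Q.natDegree = N)
    (lam0 : ℂ) (hm : 1 ≤ m) (hmult : Q.rootMultiplicity lam0 = m) :
    ∃ ε > (0:ℝ), ∃ C > (0:ℝ), ∀ (Q' : ℂ[X]), Q'.Monic → Q'.natDegree = N →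
      ∀ δ : ℝ, 0 ≤ δ → δ ≤ ε → (∀ k < N, ‖Q.coeff k - Q'.coeff k‖ ≤ δ) →
        Multiset.card (Q'.roots.filter (fun z => ‖z - lam0‖ ≤ C * δ ^ ((1:ℝ) / m))) = m := by
  obtain ⟨R, hQR, hRdvd⟩ := Q.exists_eq_pow_rootMultiplicity_mul_and_not_dvd hQ.ne_zero lam0
  rw [hmult] at hQR
  have hR0 : R.eval lam0 ≠ 0 := fun h => hRdvd (dvd_iff_isRoot.2 h)
  obtain ⟨r, hr, hRr⟩ := R.exists_pos_forall_half_norm_eval_lt hR0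
  set c := ‖R.eval lam0‖ / 2
  have hc : 0 < c := half_pos (norm_pos_iff.2 hR0)
  obtain ⟨ε, hε, hcount⟩ := exists_card_filter_roots_eq_rootMultiplicity hQ hQdeg lam0 hr
    fun z hz => lt_norm_sub_of_mem_roots hQR (fun w hw => norm_pos_iff.1 (hc.trans (hRr w hw))) hz
  have hN : (0 : ℝ) < N := by
    exact_mod_cast hm.trans (hmult ▸ hQdeg ▸ Q.rootMultiplicity_le_natDegree lam0)
  set K := N * (max 1 (‖lam0‖ + r)) ^ N / c
  have hK : 0 < K := by positivity
  refine ⟨min ε (r ^ m / K), by positivity, K ^ ((1:ℝ) / m), by positivity,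
    fun Q' hQ' hdQ' δ hδ hδε hcoeff => ?_⟩
  have hδr : K * δ ≤ r ^ m := (le_div_iff₀' hK).1 (hδε.trans (min_le_right _ _))
  rw [← Real.mul_rpow hK.le hδ, filter_roots_norm_sub_le_rpow_eq hm hQR hQ hQ' hQdeg hdQ' hδ
    hcoeff hr.le hc (fun z hz => (hRr z hz).le) hδr, ← hmult,
    hcount Q' hQ' hdQ' fun k hk => (hcoeff k hk).trans (hδε.trans (min_le_left _ _))]
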